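/- Let K be a simplicial complex whose vertex set is partitioned into n+1 color classes V_0,...,V_n. For each nonempty S ⊆ {0,...,n}, let K_S denote the subcomplex of K induced by the vertices in ⋃_{i∈S} V_i. If for every nonempty S ⊆ {0,...,n} the reduced simplicial homology group H̃_{|S|-2}(K_S) (with coefficients in a fixed field) vanishes, then K contains a rainbow n-simplex, i.e., an n-dimensional simplex with exactly one vertex in each V_i. -/

import Mathlib

open scoped Classical BigOperators

/-- An abstract simplicial complex on vertex type `V`, encoded as a
downward-closed family of finite subsets of `V`. -/
structure SComplex (V : Type) where
  faces : Set (Finset V)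
  down_closed : ∀ s ∈ faces, ∀ t ⊆ s, t ∈ faces

namespace SComplex

variable {V : Type}

/-- The vertex set of a simplicial complex. -/
def verts (K : SComplex V) : Set V := {v | {v} ∈ K.faces}

/-- The subcomplex induced by a set of vertices. -/
def induced (K : SComplex V) (U : Set V) : SComplex V where
  faces := {s | s ∈ K.faces ∧ ↑s ⊆ U}
  down_closed := by
    rintro s ⟨hs, hsU⟩ t hts
    exact ⟨K.down_closed s hs t hts, fun v hv => hsU (hts hv)⟩

/-- The intersection of two simplicial complexes on the same vertex type. -/
def interC (A B : SComplex V) : SComplex V where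
  faces := A.faces ∩ B.faces
  down_closed := by
    rintro s ⟨hA, hB⟩ t hts
    exact ⟨A.down_closed s hA t hts, B.down_closed s hB t hts⟩

/-- The geometric realization of `K`, as a set of convex-weight functions in `V → ℝ`. -/
def space (K : SComplex V) : Set (V → ℝ) :=
  {x | (∀ v, 0 ≤ x v) ∧ (∃ s ∈ K.faces, s.Nonempty ∧ Function.support x ⊆ ↑s) ∧
    ∑ᶠ v, x v = 1}

lemma induced_space_subset (K : SComplex V) (U : Set V) :
    (K.induced U).space ⊆ K.space := by
  rintro x ⟨h0, ⟨s, ⟨hs, _⟩, hsupp⟩, h1⟩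
  exact ⟨h0, ⟨s, hs, hsupp⟩, h1⟩

/-- A simplex of `K` having exactly one vertex of each of the `n` colors. -/
def hasRainbow (K : SComplex V) {n : ℕ} (c : V → Fin n) : Prop :=
  ∃ s ∈ K.faces, ∀ i : Fin n, ∃! v, v ∈ s ∧ c v = i

section Homology

variable (F : Type) [Field F] [LinearOrder V]

/-- The boundary of a single (ordered) simplex, with signs given by the position
of each deleted vertex in the sorted ordering. -/
noncomputable def bdryElem (s : Finset V) : Finset V →₀ F :=
  ∑ v ∈ s, ((-1 : F) ^ ((s.sort (· ≤ ·)).idxOf v)) • Finsupp.single (s.erase v) (1 : F)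

/-- The simplicial boundary operator on formal chains (the empty simplex plays
the role of the augmentation, giving reduced homology). -/
noncomputable def bdry : (Finset V →₀ F) →ₗ[F] (Finset V →₀ F) :=
  Finsupp.lsum F fun s => LinearMap.toSpanSingleton F (Finset V →₀ F) (bdryElem F s)

/-- The simplices of (integer) dimension `k` of `K`; the empty simplex has dimension `-1`. -/
def chainSet (K : SComplex V) (k : ℤ) : Set (Finset V) :=
  {s | s ∈ K.faces ∧ (s.card : ℤ) = k + 1}

/-- The space of simplicial `k`-chains of `K` with coefficients in `F`. -/
noncomputable def chains (K : SComplex V) (k : ℤ) : Submodule F (Finset V →₀ F) :=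
  Finsupp.supported F F (chainSet K k)

/-- Vanishing of the reduced simplicial homology of `K` in degree `k`
with coefficients in the field `F`: every `k`-cycle bounds. -/
def redHomologyZero (K : SComplex V) (k : ℤ) : Prop :=
  ∀ c ∈ chains F K k, bdry F c = 0 → ∃ b ∈ chains F K (k + 1), bdry F b = c

/-- Vanishing of the relative (reduced) simplicial homology of the pair `(K, L)`
in degree `k`: every relative `k`-cycle is a relative boundary. -/
def relHomologyZero (K L : SComplex V) (k : ℤ) : Prop :=
  ∀ c ∈ chains F K k, bdry F c ∈ chains F L (k - 1) →
    ∃ b ∈ chains F K (k + 1), c - bdry F b ∈ chains F L k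

/-- The `k`-cycles of `K`. -/
noncomputable def cycles (K : SComplex V) (k : ℤ) : Submodule F (Finset V →₀ F) :=
  chains F K k ⊓ LinearMap.ker (bdry F)

/-- The `k`-boundaries of `K`. -/
noncomputable def boundaries (K : SComplex V) (k : ℤ) : Submodule F (Finset V →₀ F) :=
  Submodule.map (bdry F) (chains F K (k + 1))

/-- The reduced simplicial homology of `K` in degree `k` with coefficients in `F`:
the image of the cycles in the quotient by the boundaries. -/
noncomputable abbrev redHomology (K : SComplex V) (k : ℤ) : Type :=
  ↥(Submodule.map (boundaries F K k).mkQ (cycles F K k))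

end Homology

/-- The barycenter of a simplex, as a point of the realization. -/
noncomputable def bary (s : Finset V) : V → ℝ :=
  fun v => if v ∈ s then ((s.card : ℝ))⁻¹ else 0

/-- The derived neighborhood `N(L, K')` of a subcomplex `L` of `K` in the first
barycentric subdivision `K'`: the union of the closed simplices of `K'`
(convex hulls of barycenters along flags of faces of `K`) meeting `L`. -/
def derivedNbhd (K L : SComplex V) : Set (V → ℝ) :=
  {x | ∃ l : List (Finset V), l.Chain' (· ⊂ ·) ∧ (∀ s ∈ l, s ∈ K.faces ∧ s.Nonempty) ∧
    (∃ s ∈ l, s ∈ L.faces) ∧ x ∈ convexHull ℝ {y | ∃ s ∈ l, y = bary s}}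

end SComplex

/-- `A` is a strong deformation retract of the topological space `X`. -/
def IsSDRetract {X : Type*} [TopologicalSpace X] (A : Set X) : Prop :=
  ∃ H : C(X × unitInterval, X),
    (∀ x, H (x, 0) = x) ∧ (∀ x, H (x, 1) ∈ A) ∧ ∀ a ∈ A, ∀ t, H (a, t) = a

/-- A closed topological `n`-manifold: compact, and every point has an open
neighborhood homeomorphic to `ℝⁿ`. -/
def IsClosedManifoldOfDim (n : ℕ) (X : Type*) [TopologicalSpace X] : Prop :=
  CompactSpace X ∧ ∀ x : X, ∃ U : Set X, IsOpen U ∧ x ∈ U ∧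
    Nonempty (↥U ≃ₜ EuclideanSpace ℝ (Fin n))

/-- The closed half-space in `ℝⁿ`. -/
def EuclideanHalf (n : ℕ) : Set (EuclideanSpace ℝ (Fin n)) :=
  {y | ∀ h : 0 < n, 0 ≤ y ⟨0, h⟩}

/-- A compact topological `n`-manifold with (possibly empty) boundary. -/
def IsManifoldWithBoundaryOfDim (n : ℕ) (X : Type*) [TopologicalSpace X] : Prop :=
  CompactSpace X ∧ ∀ x : X, ∃ U : Set X, IsOpen U ∧ x ∈ U ∧
    (Nonempty (↥U ≃ₜ EuclideanSpace ℝ (Fin n)) ∨ Nonempty (↥U ≃ₜ ↥(EuclideanHalf n)))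

/-- The boundary of a topological `n`-manifold: the points with no open
neighborhood homeomorphic to `ℝⁿ`. -/
def manifoldBoundarySet (n : ℕ) (X : Type*) [TopologicalSpace X] : Set X :=
  {x | ¬ ∃ U : Set X, IsOpen U ∧ x ∈ U ∧ Nonempty (↥U ≃ₜ EuclideanSpace ℝ (Fin n))}

/-- The pushforward of a weight function along a vertex map. -/
noncomputable def pushf {V' V : Type} (π : V' → V) (x : V' → ℝ) : V → ℝ :=
  fun v => ∑ᶠ w ∈ {w | π w = v}, x w

/-- A simplicial covering map: a simplicial map sending each simplex bijectively
onto a simplex, whose realization is a topological covering map. -/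
def IsSimplicialCovering {V' V : Type} (π : V' → V) (Kt : SComplex V') (K : SComplex V) :
    Prop :=
  (∀ s ∈ Kt.faces, s.image π ∈ K.faces ∧ Set.InjOn π ↑s) ∧
  ∃ f : ↥Kt.space → ↥K.space, Continuous f ∧ (∀ x, (f x : V → ℝ) = pushf π ↑x) ∧
    IsCoveringMap f

/-- The preimage subcomplex of `L ⊆ K` under a simplicial map `π`. -/
def preimC {V' V : Type} (π : V' → V) (Kt : SComplex V') (L : SComplex V) : SComplex V' where
  faces := {s | s ∈ Kt.faces ∧ s.image π ∈ L.faces}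
  down_closed := by
    rintro s ⟨hs, hL⟩ t hts
    exact ⟨Kt.down_closed s hs t hts, L.down_closed _ hL _ (Finset.image_subset_image hts)⟩

open SComplex

attribute [local instance 2000] LinearOrder.toDecidableEq LinearOrder.toDecidableLE

namespace MMMAux

open SComplex Finsupp

variable {V : Type} [LinearOrder V] {F : Type} [Field F]

lemma list_indexOf_sorted : ∀ (l : List V), l.Pairwise (· < ·) → ∀ v ∈ l,
    l.idxOf v = l.countP (fun u => decide (u < v)) := by
  intro l
  induction l with
  | nil => intro _ v hv; simp at hv
  | cons a t ih =>
    intro hs v hv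
    have ha : ∀ b ∈ t, a < b := (List.pairwise_cons.mp hs).1
    have ht : t.Pairwise (· < ·) := (List.pairwise_cons.mp hs).2
    rcases List.mem_cons.mp hv with rfl | hvt
    · rw [List.idxOf_cons_self, List.countP_cons]
      have : t.countP (fun u => decide (u < v)) = 0 := by
        rw [List.countP_eq_zero]
        intro b hb
        simp only [decide_eq_true_eq]
        exact not_lt_of_gt (ha b hb)
      simp [this]
    · have hne : v ≠ a := by rintro rfl; exact absurd (ha v hvt) (lt_irrefl v)
      rw [List.idxOf_cons_ne _ hne.symm, List.countP_cons, ih ht v hvt]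
      have : a < v := ha v hvt
      simp [this, Nat.succ_eq_add_one]

lemma indexOf_sort_eq (s : Finset V) {v : V} (hv : v ∈ s) :
    (s.sort (· ≤ ·)).idxOf v = (s.filter (· < v)).card := by
  have h1 : (s.sort (· ≤ ·)).idxOf v
      = (s.sort (· ≤ ·)).countP (fun u => decide (u < v)) :=
    list_indexOf_sorted _ (Finset.sortedLT_sort s).pairwise v ((Finset.mem_sort _).2 hv)
  rw [h1, (Finset.sort_perm_toList (s := s) (r := (· ≤ ·))).countP_eq]
  have h2 : s.toList.countP (fun u => decide (u < v)) = Multiset.countP (· < v) s.val := by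
    rw [← Multiset.coe_countP]
    congr 1
    exact s.val.coe_toList
  rw [h2, Multiset.countP_eq_card_filter]
  rfl

lemma bdry_single (s : Finset V) (a : F) :
    bdry F (Finsupp.single s a) = a • bdryElem F s := by
  rw [bdry, Finsupp.lsum_single, LinearMap.toSpanSingleton_apply]

lemma pair_cancel {s : Finset V} {v w : V} (hv : v ∈ s) (hw : w ∈ s) (hvw : v < w) :
    ((-1 : F) ^ ((s.sort (· ≤ ·)).idxOf v) * (-1 : F) ^ (((s.erase v).sort (· ≤ ·)).idxOf w))
      • Finsupp.single ((s.erase v).erase w) (1 : F)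
    + ((-1 : F) ^ ((s.sort (· ≤ ·)).idxOf w) * (-1 : F) ^ (((s.erase w).sort (· ≤ ·)).idxOf v))
      • Finsupp.single ((s.erase w).erase v) (1 : F) = 0 := by
  have hne : v ≠ w := ne_of_lt hvw
  have hwv : w ∈ s.erase v := Finset.mem_erase.2 ⟨hne.symm, hw⟩
  have hvw' : v ∈ s.erase w := Finset.mem_erase.2 ⟨hne, hv⟩
  set A : V → ℕ := fun x => (s.filter (· < x)).card with hA
  have e1 : (s.sort (· ≤ ·)).idxOf v = A v := indexOf_sort_eq s hv
  have e2 : (s.sort (· ≤ ·)).idxOf w = A w := indexOf_sort_eq s hw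
  have e3 : ((s.erase v).sort (· ≤ ·)).idxOf w = A w - 1 := by
    rw [indexOf_sort_eq _ hwv, Finset.filter_erase]
    rw [Finset.card_erase_of_mem (show v ∈ s.filter (· < w) from Finset.mem_filter.2 ⟨hv, hvw⟩)]
  have e4 : ((s.erase w).sort (· ≤ ·)).idxOf v = A v := by
    rw [indexOf_sort_eq _ hvw', Finset.filter_erase]
    rw [Finset.erase_eq_of_notMem]
    intro hmem
    exact absurd (Finset.mem_filter.1 hmem).2 (not_lt_of_gt hvw)
  have hAw : 1 ≤ A w := by
    have : v ∈ s.filter (· < w) := Finset.mem_filter.2 ⟨hv, hvw⟩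
    exact Finset.card_pos.2 ⟨v, this⟩
  rw [e1, e2, e3, e4, Finset.erase_right_comm (a := v) (b := w)]
  rw [← add_smul]
  convert zero_smul F _
  have hre : A w - 1 + 1 = A w := Nat.succ_pred_eq_of_pos hAw
  calc (-1 : F) ^ A v * (-1) ^ (A w - 1) + (-1) ^ A w * (-1) ^ A v
      = (-1 : F) ^ A v * (-1) ^ (A w - 1) + (-1) ^ (A w - 1 + 1) * (-1) ^ A v := by rw [hre]
    _ = 0 := by rw [pow_succ]; ring

lemma bdry_bdryElem (s : Finset V) : bdry F (bdryElem F s) = (0 : Finset V →₀ F) := by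
  rw [bdryElem, map_sum]
  have step : ∀ v ∈ s, bdry F (((-1 : F) ^ ((s.sort (· ≤ ·)).idxOf v)) •
      Finsupp.single (s.erase v) (1 : F))
      = ∑ w ∈ s.erase v, ((-1 : F) ^ ((s.sort (· ≤ ·)).idxOf v)
          * (-1 : F) ^ (((s.erase v).sort (· ≤ ·)).idxOf w))
        • Finsupp.single ((s.erase v).erase w) (1 : F) := by
    intro v hv
    rw [map_smul, bdry_single, one_smul, bdryElem, Finset.smul_sum]
    refine Finset.sum_congr rfl fun w hw => ?_
    rw [smul_smul]
  rw [Finset.sum_congr rfl step]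
  have conv1 : ∀ v ∈ s, ∑ w ∈ s.erase v, ((-1 : F) ^ ((s.sort (· ≤ ·)).idxOf v)
          * (-1 : F) ^ (((s.erase v).sort (· ≤ ·)).idxOf w))
        • Finsupp.single ((s.erase v).erase w) (1 : F)
      = ∑ w ∈ s, if w ≠ v then ((-1 : F) ^ ((s.sort (· ≤ ·)).idxOf v)
          * (-1 : F) ^ (((s.erase v).sort (· ≤ ·)).idxOf w))
        • Finsupp.single ((s.erase v).erase w) (1 : F) else 0 := by
    intro v hv
    rw [← Finset.sum_filter, Finset.filter_ne']
  rw [Finset.sum_congr rfl conv1, ← Finset.sum_product']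
  set g : V × V → (Finset V →₀ F) := fun p => if p.2 ≠ p.1 then
      ((-1 : F) ^ ((s.sort (· ≤ ·)).idxOf p.1)
          * (-1 : F) ^ (((s.erase p.1).sort (· ≤ ·)).idxOf p.2))
        • Finsupp.single ((s.erase p.1).erase p.2) (1 : F) else 0 with hg
  refine Finset.sum_involution (fun p _ => (p.2, p.1)) ?_ ?_ (fun p hp => ?_) (fun p hp => rfl)
  · rintro ⟨v, w⟩ hp
    simp only [Finset.mem_product] at hp
    by_cases hvw : w = v
    · subst hvw; simp [hg]
    · simp only [hg, if_neg, hvw, Ne.symm hvw, ne_eq, not_false_iff, if_true]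
      rcases lt_or_gt_of_ne (Ne.symm hvw) with h | h
      · exact pair_cancel hp.1 hp.2 h
      · rw [add_comm]; exact pair_cancel hp.2 hp.1 h
  · rintro ⟨v, w⟩ hp hne
    simp only [hg, ne_eq, Prod.mk.injEq] at hne ⊢
    intro hcon
    apply hne
    rw [if_neg]
    rintro h
    exact h (hcon.2.symm ▸ rfl)
  · simp only [Finset.mem_product] at hp ⊢; exact ⟨hp.2, hp.1⟩

lemma bdry_bdry (x : Finset V →₀ F) : bdry F (bdry F x) = 0 := by
  induction x using Finsupp.induction with
  | zero => simp
  | single_add s a f _ _ ih =>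
    rw [map_add, map_add, ih, add_zero, bdry_single, map_smul, bdry_bdryElem, smul_zero]

lemma bdryElem_sum_erase (s : Finset V) :
    ∑ v ∈ s, ((-1 : F) ^ ((s.sort (· ≤ ·)).idxOf v)) • bdryElem F (s.erase v)
      = (0 : Finset V →₀ F) := by
  have h := bdry_bdryElem (F := F) s
  rw [bdryElem, map_sum] at h
  rw [← h]
  refine Finset.sum_congr rfl fun v hv => ?_
  rw [map_smul, bdry_single, one_smul]

lemma support_bdry {x : Finset V →₀ F} {σ : Finset V} (hσ : σ ∈ (bdry F x).support) :
    ∃ τ ∈ x.support, ∃ v ∈ τ, σ = τ.erase v := by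
  have hx : bdry F x = ∑ τ ∈ x.support, x τ • bdryElem F τ := by
    rw [bdry, Finsupp.lsum_apply]
    rfl
  rw [hx] at hσ
  obtain ⟨τ, hτ, hστ⟩ := Finset.mem_biUnion.1 (Finsupp.support_finset_sum hσ)
  refine ⟨τ, hτ, ?_⟩
  have hστ' : σ ∈ (bdryElem F τ).support := Finsupp.support_smul hστ
  rw [bdryElem] at hστ'
  obtain ⟨v, hv, hσv⟩ := Finset.mem_biUnion.1 (Finsupp.support_finset_sum hστ')
  refine ⟨v, hv, ?_⟩
  have h1 : σ ∈ (Finsupp.single (τ.erase v) (1 : F)).support := Finsupp.support_smul hσv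
  have h2 := Finsupp.support_single_subset h1
  simpa using h2

lemma bdry_mem_chains {K : SComplex V} {k : ℤ} {x : Finset V →₀ F}
    (hx : x ∈ chains F K k) : bdry F x ∈ chains F K (k - 1) := by
  rw [chains, Finsupp.mem_supported] at hx ⊢
  intro σ hσ
  obtain ⟨τ, hτ, v, hvτ, rfl⟩ := support_bdry hσ
  obtain ⟨hτf, hτc⟩ := hx hτ
  refine ⟨K.down_closed τ hτf _ (Finset.erase_subset v τ), ?_⟩
  have hc : τ.card = (τ.erase v).card + 1 := by
    rw [Finset.card_erase_of_mem hvτ]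
    have : 1 ≤ τ.card := Finset.card_pos.2 ⟨v, hvτ⟩
    omega
  rw [hc] at hτc
  push_cast at hτc
  omega

lemma chains_mono {K K' : SComplex V} (h : K.faces ⊆ K'.faces) (k : ℤ) :
    chains F K k ≤ chains F K' k := by
  apply Finsupp.supported_mono
  intro σ hσ
  exact ⟨h hσ.1, hσ.2⟩

lemma mem_chainSet_of_mem_chains {K : SComplex V} {k : ℤ} {x : Finset V →₀ F}
    (hx : x ∈ chains F K k) {σ : Finset V} (hσ : σ ∈ x.support) :
    σ ∈ K.faces ∧ (σ.card : ℤ) = k + 1 := by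
  rw [chains, Finsupp.mem_supported] at hx
  exact hx hσ

/-- The main induction: existence of a compatible family of chains. -/
lemma main_induction {n : ℕ} (K : SComplex V) (c : V → Fin (n + 1))
    (hempty : (∅ : Finset V) ∈ K.faces)
    (hvanish : ∀ S : Finset (Fin (n + 1)), S.Nonempty →
      redHomologyZero F (K.induced {v | c v ∈ S}) ((S.card : ℤ) - 2)) :
    ∀ k : ℕ, ∃ z : Finset (Fin (n + 1)) → (Finset V →₀ F),
      ∀ T : Finset (Fin (n + 1)), T.card ≤ k →
        z T ∈ chains F (K.induced {v | c v ∈ T}) ((T.card : ℤ) - 1) ∧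
        bdry F (z T) = ∑ i ∈ T, ((-1 : F) ^ ((T.sort (· ≤ ·)).idxOf i)) • z (T.erase i) ∧
        ∀ u ∈ chains F (K.induced {v | c v ∈ T}) ((T.card : ℤ)),
          ∃ σ ∈ (z T - bdry F u).support, σ.image c = T := by
  intro k
  induction k with
  | zero =>
    refine ⟨fun _ => Finsupp.single ∅ 1, ?_⟩
    intro T hT
    have hTe : T = ∅ := Finset.card_eq_zero.1 (Nat.le_zero.1 hT)
    subst hTe
    refine ⟨?_, ?_, ?_⟩
    · rw [chains, Finsupp.mem_supported]
      intro σ hσ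
      rw [Finset.mem_coe, Finsupp.support_single_ne_zero _ one_ne_zero,
        Finset.mem_singleton] at hσ
      subst hσ
      exact ⟨⟨hempty, by simp⟩, by simp⟩
    · rw [bdry_single, bdryElem]
      simp
    · intro u hu
      have hu0 : u = 0 := by
        have hsup : u.support = ∅ := by
          rw [← Finset.subset_empty]
          intro σ hσ
          obtain ⟨⟨_, hσsub⟩, hσc⟩ := mem_chainSet_of_mem_chains hu hσ
          exfalso
          have hσe : σ = ∅ := by
            rw [← Finset.subset_empty]
            intro w hw
            exact absurd (hσsub hw) (by simp)
          rw [hσe] at hσc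
          simp at hσc
        exact Finsupp.support_eq_empty.1 hsup
      subst hu0
      refine ⟨∅, ?_, by simp⟩
      rw [map_zero, sub_zero, Finsupp.support_single_ne_zero _ one_ne_zero]
      simp
  | succ k ih =>
    obtain ⟨z, hz⟩ := ih
    have step : ∀ T : Finset (Fin (n + 1)), T.card = k + 1 →
        ∃ b, b ∈ chains F (K.induced {v | c v ∈ T}) ((T.card : ℤ) - 1) ∧
          bdry F b = ∑ i ∈ T, ((-1 : F) ^ ((T.sort (· ≤ ·)).idxOf i)) • z (T.erase i) := by
      intro T hT
      have hTpos : 0 < T.card := by omega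
      have hsub : ∀ i ∈ T, (T.erase i).card = k := by
        intro i hi
        rw [Finset.card_erase_of_mem hi, hT]
        omega
      have hgoodsub : ∀ i ∈ T,
          z (T.erase i) ∈ chains F (K.induced {v | c v ∈ T.erase i}) (((T.erase i).card : ℤ) - 1) ∧
          bdry F (z (T.erase i)) = ∑ j ∈ T.erase i,
            ((-1 : F) ^ (((T.erase i).sort (· ≤ ·)).idxOf j)) • z ((T.erase i).erase j) ∧
          ∀ u ∈ chains F (K.induced {v | c v ∈ T.erase i}) (((T.erase i).card : ℤ)),
            ∃ σ ∈ (z (T.erase i) - bdry F u).support, σ.image c = T.erase i := by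
        intro i hi
        exact hz _ (le_of_eq (hsub i hi))
      set ζ := ∑ i ∈ T, ((-1 : F) ^ ((T.sort (· ≤ ·)).idxOf i)) • z (T.erase i) with hζ
      have hdeg : ∀ i ∈ T, ((T.erase i).card : ℤ) - 1 = (T.card : ℤ) - 2 := by
        intro i hi
        rw [hsub i hi, hT]
        push_cast
        ring
      have hζmem : ζ ∈ chains F (K.induced {v | c v ∈ T}) ((T.card : ℤ) - 2) := by
        refine Submodule.sum_mem _ fun i hi => Submodule.smul_mem _ _ ?_
        have h1 := (hgoodsub i hi).1
        rw [hdeg i hi] at h1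
        refine chains_mono ?_ _ h1
        rintro σ ⟨hσf, hσsub⟩
        exact ⟨hσf, fun v hv => Finset.mem_of_mem_erase (hσsub hv)⟩
      have hζcyc : bdry F ζ = 0 := by
        set W := Finsupp.lsum F
          (fun U : Finset (Fin (n + 1)) => LinearMap.toSpanSingleton F (Finset V →₀ F) (z U))
          with hW
        have hWsingle : ∀ U (a : F), W (Finsupp.single U a) = a • z U := fun U a => by
          rw [hW, Finsupp.lsum_single, LinearMap.toSpanSingleton_apply]
        have hWbe : ∀ U : Finset (Fin (n + 1)), W (bdryElem F U)
            = ∑ j ∈ U, ((-1 : F) ^ ((U.sort (· ≤ ·)).idxOf j)) • z (U.erase j) := by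
          intro U
          rw [bdryElem, map_sum]
          refine Finset.sum_congr rfl fun j hj => ?_
          rw [map_smul, hWsingle, one_smul]
        calc bdry F ζ
            = ∑ i ∈ T, ((-1 : F) ^ ((T.sort (· ≤ ·)).idxOf i)) • bdry F (z (T.erase i)) := by
              rw [hζ, map_sum]
              exact Finset.sum_congr rfl fun i hi => map_smul _ _ _
          _ = ∑ i ∈ T, ((-1 : F) ^ ((T.sort (· ≤ ·)).idxOf i)) • W (bdryElem F (T.erase i)) := by
              refine Finset.sum_congr rfl fun i hi => ?_
              rw [hWbe, (hgoodsub i hi).2.1]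
          _ = W (∑ i ∈ T, ((-1 : F) ^ ((T.sort (· ≤ ·)).idxOf i)) • bdryElem F (T.erase i)) := by
              rw [map_sum]
              exact Finset.sum_congr rfl fun i hi => (map_smul _ _ _).symm
          _ = 0 := by
              have hz0 : (∑ i ∈ T, ((-1 : F) ^ ((T.sort (· ≤ ·)).idxOf i)) • bdryElem F (T.erase i))
                  = (0 : Finset (Fin (n + 1)) →₀ F) := bdryElem_sum_erase T
              rw [hz0, map_zero]
      obtain ⟨b, hb1, hb2⟩ := hvanish T (Finset.card_pos.1 hTpos) ζ hζmem hζcyc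
      have : (T.card : ℤ) - 2 + 1 = (T.card : ℤ) - 1 := by ring
      rw [this] at hb1
      exact ⟨b, hb1, hb2⟩
    choose bfun hb1 hb2 using step
    refine ⟨fun T => if h : T.card = k + 1 then bfun T h else z T, ?_⟩
    intro T hT
    have herase : ∀ (U : Finset (Fin (n + 1))), U.card ≤ k →
        (if h : U.card = k + 1 then bfun U h else z U) = z U := by
      intro U hU
      rw [dif_neg (by omega)]
    by_cases h : T.card = k + 1
    · simp only [dif_pos h]
      have hzerase : ∀ i ∈ T, (if h' : (T.erase i).card = k + 1 then bfun _ h' else z (T.erase i))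
          = z (T.erase i) := by
        intro i hi
        exact herase _ (by rw [Finset.card_erase_of_mem hi, h]; omega)
      refine ⟨hb1 T h, ?_, ?_⟩
      · rw [hb2 T h]
        exact Finset.sum_congr rfl fun i hi => by rw [hzerase i hi]
      · -- the key non-degeneracy argument
        intro u hu
        by_contra hcon
        push_neg at hcon
        set b := bfun T h with hbdef
        set l := b - bdry F u with hldef
        have hl : l ∈ chains F (K.induced {v | c v ∈ T}) ((T.card : ℤ) - 1) := by
          refine Submodule.sub_mem _ (hb1 T h) ?_
          exact bdry_mem_chains (F := F) hu
        have hdl : bdry F l = ∑ i ∈ T, ((-1 : F) ^ ((T.sort (· ≤ ·)).idxOf i)) • z (T.erase i) := by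
          rw [hldef, map_sub, hb2 T h, bdry_bdry, sub_zero]
        obtain ⟨i, hi⟩ := Finset.card_pos.1 (show 0 < T.card by omega)
        set ε : F := (-1 : F) ^ ((T.sort (· ≤ ·)).idxOf i) with hε
        set li := Finsupp.filter (fun σ : Finset V => σ.image c = T.erase i) l with hlidef
        have hTcard : T.card = k + 1 := h
        have hlsupp : ∀ σ ∈ l.support, σ ∈ K.faces ∧ σ.image c ⊆ T ∧ (σ.card : ℤ) = (T.card : ℤ) := by
          intro σ hσ
          obtain ⟨⟨hσf, hσsub⟩, hσc⟩ := mem_chainSet_of_mem_chains hl hσ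
          refine ⟨hσf, ?_, by omega⟩
          intro x hx
          obtain ⟨w, hwσ, rfl⟩ := Finset.mem_image.1 hx
          exact hσsub hwσ
        have hlimem : li ∈ chains F (K.induced {v | c v ∈ T.erase i}) (((T.erase i).card : ℤ)) := by
          rw [chains, Finsupp.mem_supported]
          intro σ hσ
          rw [Finset.mem_coe, Finsupp.support_filter, Finset.mem_filter] at hσ
          obtain ⟨hσl, hσim⟩ := hσ
          obtain ⟨hσf, hσsub, hσc⟩ := hlsupp σ hσl
          refine ⟨⟨hσf, ?_⟩, ?_⟩
          · intro w hw
            have : c w ∈ σ.image c := Finset.mem_image_of_mem c hw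
            rw [hσim] at this
            exact this
          · rw [Finset.card_erase_of_mem hi]
            have : 1 ≤ T.card := by omega
            push_cast [Nat.cast_sub this]
            omega
        -- evaluation of ζ at color-exactly-(T.erase i) simplices
        have hζeval : ∀ σ : Finset V, σ.image c = T.erase i →
            (∑ j ∈ T, ((-1 : F) ^ ((T.sort (· ≤ ·)).idxOf j)) • z (T.erase j)) σ
              = ε * (z (T.erase i) σ) := by
          intro σ hσim
          rw [Finset.sum_apply']
          rw [Finset.sum_eq_single i]
          · rw [Finsupp.smul_apply, smul_eq_mul, hε]
          · intro j hj hji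
            rw [Finsupp.smul_apply, smul_eq_mul]
            have hzero : z (T.erase j) σ = 0 := by
              by_contra hnz
              have hσs : σ ∈ (z (T.erase j)).support := Finsupp.mem_support_iff.2 hnz
              obtain ⟨⟨_, hσsub⟩, _⟩ := mem_chainSet_of_mem_chains (hz (T.erase j)
                (by rw [Finset.card_erase_of_mem hj, h]; omega)).1 hσs
              have him : σ.image c ⊆ T.erase j := by
                intro x hx
                obtain ⟨w, hwσ, rfl⟩ := Finset.mem_image.1 hx
                exact hσsub hwσ
              rw [hσim] at him
              have : j ∈ T.erase j := him (Finset.mem_erase.2 ⟨hji, hj⟩)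
              exact absurd this (Finset.notMem_erase j T)
            rw [hzero, mul_zero]
          · intro hiT
            exact absurd hi hiT
        -- boundary of (l - li) vanishes at such simplices
        have hbval : ∀ σ : Finset V, σ.image c = T.erase i → (bdry F (l - li)) σ = 0 := by
          intro σ hσim
          by_contra hnz
          have hσs : σ ∈ (bdry F (l - li)).support := Finsupp.mem_support_iff.2 hnz
          obtain ⟨τ, hτ, v, hvτ, rfl⟩ := support_bdry hσs
          have hτl : τ ∈ l.support ∧ τ.image c ≠ T.erase i := by
            have hτv : (l - li) τ ≠ 0 := Finsupp.mem_support_iff.1 hτ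
            rw [Finsupp.sub_apply, hlidef, Finsupp.filter_apply] at hτv
            by_cases hc : τ.image c = T.erase i
            · rw [if_pos hc, sub_self] at hτv; exact absurd rfl hτv
            · rw [if_neg hc, sub_zero] at hτv
              exact ⟨Finsupp.mem_support_iff.2 hτv, hc⟩
          obtain ⟨hτsup, hτne⟩ := hτl
          obtain ⟨hτf, hτsub, hτc⟩ := hlsupp τ hτsup
          have hτneT : τ.image c ≠ T := hcon τ (by rwa [hldef] at hτsup)
          -- T.erase i ⊆ τ.image c ⊆ T, image ≠ both: contradiction
          have hlow : T.erase i ⊆ τ.image c := by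
            rw [← hσim]
            exact Finset.image_subset_image (Finset.erase_subset v τ)
          have : τ.image c = T.erase i ∨ τ.image c = T := by
            by_cases hiτ : i ∈ τ.image c
            · right
              refine Finset.Subset.antisymm hτsub ?_
              intro x hx
              by_cases hxi : x = i
              · subst hxi; exact hiτ
              · exact hlow (Finset.mem_erase.2 ⟨hxi, hx⟩)
            · left
              refine Finset.Subset.antisymm ?_ hlow
              intro x hx
              refine Finset.mem_erase.2 ⟨?_, hτsub hx⟩
              rintro rfl
              exact hiτ hx
          rcases this with h1 | h1
          · exact hτne h1
          · exact hτneT h1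
        -- hence the boundary of li computes z (T.erase i) at such simplices
        have hkey : ∀ σ : Finset V, σ.image c = T.erase i →
            (bdry F li) σ = ε * (z (T.erase i) σ) := by
          intro σ hσim
          have hsplit : bdry F li = bdry F l - bdry F (l - li) := by
            rw [map_sub (bdry F) l li, sub_sub_cancel]
          rw [hsplit, Finsupp.sub_apply, hdl, hζeval σ hσim, hbval σ hσim, sub_zero]
        -- apply the inductive non-degeneracy for T.erase i
        have hgsub := (hz (T.erase i) (by rw [Finset.card_erase_of_mem hi, h]; omega)).2.2
          (ε • li) (Submodule.smul_mem _ _ hlimem)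
        obtain ⟨σ, hσmem, hσim⟩ := hgsub
        have hzero : (z (T.erase i) - bdry F (ε • li)) σ = 0 := by
          rw [Finsupp.sub_apply, map_smul, Finsupp.smul_apply, hkey σ hσim, smul_eq_mul]
          have hεε : ε * ε = 1 := by
            rw [hε, ← pow_add]
            exact Even.neg_one_pow ⟨_, rfl⟩
          calc z (T.erase i) σ - ε * (ε * z (T.erase i) σ)
              = (1 - ε * ε) * z (T.erase i) σ := by ring
            _ = 0 := by rw [hεε]; ring
        exact absurd hzero (Finsupp.mem_support_iff.1 hσmem)
    · have hT' : T.card ≤ k := by omega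
      obtain ⟨g1, g2, g3⟩ := hz T hT'
      simp only [dif_neg h]
      refine ⟨g1, ?_, g3⟩
      rw [g2]
      refine Finset.sum_congr rfl fun i hi => ?_
      rw [herase _ (by
        have : 0 < T.card := Finset.card_pos.2 ⟨i, hi⟩
        rw [Finset.card_erase_of_mem hi]; omega)]

end MMMAux


/-- Meshulam-Meunier-Montejano: if all the reduced homology groups
`H̃_{|S|-2}(K_S)` vanish, then `K` has a rainbow `n`-simplex. -/
theorem stmt_0 {V : Type} [LinearOrder V] (F : Type) [Field F] (n : ℕ)
    (K : SComplex V) (c : V → Fin (n + 1))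
    (hne : ∀ i : Fin (n + 1), ∃ v ∈ K.verts, c v = i)
    (hvanish : ∀ S : Finset (Fin (n + 1)), S.Nonempty →
      redHomologyZero F (K.induced {v | c v ∈ S}) ((S.card : ℤ) - 2)) :
    K.hasRainbow c := by
  classical
  obtain ⟨v0, hv0, -⟩ := hne 0
  have hempty : (∅ : Finset V) ∈ K.faces := K.down_closed _ hv0 _ (Finset.empty_subset _)
  obtain ⟨z, hz⟩ := MMMAux.main_induction (F := F) K c hempty hvanish (n + 1)
  have hcarduniv : (Finset.univ : Finset (Fin (n + 1))).card = n + 1 := by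
    rw [Finset.card_univ, Fintype.card_fin]
  obtain ⟨g1, -, g3⟩ := hz Finset.univ (le_of_eq hcarduniv)
  obtain ⟨σ, hσmem, hσim⟩ := g3 0 (Submodule.zero_mem _)
  rw [map_zero, sub_zero] at hσmem
  obtain ⟨⟨hσK, -⟩, hσcard⟩ := MMMAux.mem_chainSet_of_mem_chains g1 hσmem
  have hcard : σ.card = n + 1 := by
    rw [hcarduniv] at hσcard
    push_cast at hσcard
    omega
  have himcard : (σ.image c).card = σ.card := by
    rw [hσim, hcarduniv, hcard]
  have hinj : Set.InjOn c ↑σ := Finset.card_image_iff.1 himcard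
  refine ⟨σ, hσK, fun i => ?_⟩
  have hiim : i ∈ σ.image c := hσim ▸ Finset.mem_univ i
  obtain ⟨v, hvσ, hvc⟩ := Finset.mem_image.1 hiim
  refine ⟨v, ⟨hvσ, hvc⟩, ?_⟩
  rintro w ⟨hwσ, hwc⟩
  exact hinj hwσ hvσ (by rw [hvc, hwc])
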